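/- arXiv:1706.06732 — 2 statements merged into one kernel-verified Lean document; each statement's English description precedes it below -/
import Mathlib

section
/- Let λ = 0 and ε > 0. Assume L̄ is differentiable on (0, ε), sup{L̄'(t) : t ∈ (0, ε)} is not attained, L̄'_r(0⁺) = −∞, and L̄ is right continuous at zero. Then for every net (x_α) in [-∞,+∞] converging to −∞ and every net (y_α) in [-∞,+∞] with liminf_α y_α > −∞, one has limsup_α c_α·log μ_α([x_α, y_α]) = limsup_α c_α·log μ_α((x_α, y_α)) = 0 = −lim_α L̄*(x_α). -/
open Filter MeasureTheory Set Topology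

noncomputable section

/-- `c · log m` as an extended real number, where `m ∈ [0,∞]`. -/
def elog (c : ℝ) (m : ENNReal) : EReal := (c : EReal) * ENNReal.log m

/-- The generalized log-moment generating function `L̄` associated with the net
`(μ_α, c_α)` indexed by the filter `lf`:
`L̄(t) = limsup_α c_α · log ∫ exp(t·x/c_α) dμ_α(x)`. -/
def genLogMGF {ι : Type*} (lf : Filter ι) (μ : ι → Measure ℝ) (c : ι → ℝ) (t : ℝ) : EReal :=
  Filter.limsup
    (fun i => elog (c i) (∫⁻ x : ℝ, ENNReal.ofReal (Real.exp (t * x / c i)) ∂ (μ i))) lf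

/-- Legendre–Fenchel transform of an `EReal`-valued function on `ℝ`, evaluated at an
extended real argument: `L*(x) = sup_t (t·x − L(t))`. -/
def LegendreEE (L : ℝ → EReal) (x : EReal) : EReal := ⨆ t : ℝ, ((t : EReal) * x - L t)

open Classical in
/-- The right derivative of a convex `EReal`-valued function at `t`, with the conventions
`L'_r(t) = +∞` when `L(s) = +∞` for all `s > t` and `L'_r(t) = -∞` when `L(s) = -∞` for
some `s > t`; otherwise it is the infimum of the right difference quotients. -/
def rightDerivE (L : ℝ → EReal) (t : ℝ) : EReal :=
  if ∀ s : ℝ, t < s → L s = ⊤ then ⊤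
  else if ∃ s : ℝ, t < s ∧ L s = ⊥ then ⊥
  else ⨅ s ∈ Set.Ioi t, (L s - L t) * (((s - t)⁻¹ : ℝ) : EReal)

/-- The left derivative of a convex `EReal`-valued function at `t` (supremum of left
difference quotients). -/
def leftDerivE (L : ℝ → EReal) (t : ℝ) : EReal :=
  ⨆ s ∈ Set.Iio t, (L t - L s) * (((t - s)⁻¹ : ℝ) : EReal)

/-- Right limit at `a` of an `EReal`-valued function (as a `limsup`; it coincides with
`lim_{t→a⁺} f(t)` whenever the latter exists, e.g. for monotone or convex `f`). -/
def rightLimE (f : ℝ → EReal) (a : ℝ) : EReal := Filter.limsup f (nhdsWithin a (Set.Ioi a))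

/-- Left limit at `a` of an `EReal`-valued function (as a `limsup`; it coincides with
`lim_{t→a⁻} f(t)` whenever the latter exists). -/
def leftLimE (f : ℝ → EReal) (a : ℝ) : EReal := Filter.limsup f (nhdsWithin a (Set.Iio a))

/-- `L` is affine on the interval `(a, b]`. -/
def AffineOnIoc (L : ℝ → EReal) (a b : ℝ) : Prop :=
  ∃ p q : ℝ, ∀ s ∈ Set.Ioc a b, L s = ((p * s + q : ℝ) : EReal)

/-- `λ̃ = sup {t > λ : L is affine on (λ, t]}` (equal to `λ` if there is no such `t`). -/
def tildeOf (L : ℝ → EReal) (lam : ℝ) : ℝ :=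
  sSup (insert lam {t : ℝ | lam < t ∧ AffineOnIoc L lam t})

/-- Differentiability at `t` of an `EReal`-valued function: `L(t)` is finite and the
difference quotients converge to a (finite) real number. -/
def EDifferentiableAt (L : ℝ → EReal) (t : ℝ) : Prop :=
  (∃ r : ℝ, L t = (r : EReal)) ∧
  ∃ d : ℝ, Filter.Tendsto (fun s => (L s - L t) * (((s - t)⁻¹ : ℝ) : EReal))
    (nhdsWithin t {t}ᶜ) (nhds (d : EReal))

/-- The function `l₀(x) = − lim_{ε→0⁺} limsup_α c_α · log μ_α((x−ε, x+ε))` (the limit over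
`ε` exists by monotonicity and equals the infimum). -/
def l0fun {ι : Type*} (lf : Filter ι) (μ : ι → Measure ℝ) (c : ι → ℝ) (x : ℝ) : EReal :=
  - ⨅ ε ∈ Set.Ioi (0:ℝ),
      Filter.limsup (fun i => elog (c i) (μ i (Set.Ioo (x - ε) (x + ε)))) lf

/-- `L` restricted to `[0,∞)` is proper: `(−∞,+∞]`-valued with at least one finite value. -/
def LbarProper (L : ℝ → EReal) : Prop :=
  (∀ t : ℝ, 0 ≤ t → L t ≠ ⊥) ∧ ∃ t : ℝ, 0 ≤ t ∧ L t ≠ ⊤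

/-- `μ([x, y])` for extended-real endpoints `x, y`, with `μ` regarded as a measure on
`[-∞, +∞]`. -/
def muIccE (μ : Measure ℝ) (x y : EReal) : ENNReal :=
  μ {z : ℝ | x ≤ (z : EReal) ∧ (z : EReal) ≤ y}

/-- `μ((x, y))` for extended-real endpoints `x, y`. -/
def muIooE (μ : Measure ℝ) (x y : EReal) : ENNReal :=
  μ {z : ℝ | x < (z : EReal) ∧ (z : EReal) < y}

open Classical in
/-- The Legendre transform extended to `[-∞,+∞]` by continuity, with the paper's
convention `L̄*(−∞) = −L̄(0⁺)`. -/
def LegendreExt (L : ℝ → EReal) (x : EReal) : EReal :=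
  if x = ⊥ then -(rightLimE L 0) else if x = ⊤ then ⊤ else LegendreEE L x

end

/-!
Since `L̄'_r(0⁺) = −∞` and `L̄(0⁺) = 0`, the chords of the convex function `L̄` from the origin have
arbitrarily negative slopes: for every `K` there is `s > 0` with `L̄(s) < s·K`. Convexity across `0`
then forces `L̄ = +∞` on `(−∞, 0)`, so `L̄*(ξ) = sup_{t ≥ 0} (tξ − L̄(t))`, and this tends to
`−L̄(0⁺) = 0` as `ξ → −∞`.

For the measures, splitting `∫ exp(tx/c) dμ` over `(−∞, a]`, `(a, b)` and `[b, ∞)` gives, for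
`0 ≤ t ≤ s`, `L̄(t) ≤ max(ta, tb + limsup c log μ((a, b)), (t − s)b + L̄(s))`. If
`limsup c log μ((a, b))` stayed below some `e < 0` for every `a`, then taking `L̄(s) < s(b − 1)`,
`t` small and `a` very negative would keep `L̄(t)` below a fixed negative number, contradicting
`L̄(t) → 0`.
-/

open Filter MeasureTheory Set Topology ENNReal

lemma elog_mono {c : ℝ} (hc : 0 ≤ c) {m m' : ℝ≥0∞} (h : m ≤ m') : elog c m ≤ elog c m' :=
  mul_le_mul_of_nonneg_left (ENNReal.log_monotone h) (EReal.coe_nonneg.2 hc)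

lemma elog_nonpos {c : ℝ} (hc : 0 ≤ c) {m : ℝ≥0∞} (h : m ≤ 1) : elog c m ≤ 0 := by
  simpa [elog] using elog_mono hc h

lemma elog_rpow_mul_rpow {c : ℝ} (hc : 0 ≤ c) (m n : ℝ≥0∞) (p q : ℝ) :
    elog c (m ^ p * n ^ q) = p * elog c m + q * elog c n := by
  rw [elog, ENNReal.log_mul_add, ENNReal.log_rpow, ENNReal.log_rpow,
    EReal.left_distrib_of_nonneg_of_ne_top (EReal.coe_nonneg.2 hc) (EReal.coe_ne_top c),
    elog, elog, mul_left_comm, mul_left_comm (c : EReal)]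

lemma elog_ofReal_exp_mul {c : ℝ} (hc : 0 < c) (r : ℝ) (m : ℝ≥0∞) :
    elog c (ENNReal.ofReal (Real.exp (r / c)) * m) = r + elog c m := by
  rw [elog, ENNReal.log_mul_add, ENNReal.log_ofReal_of_pos (Real.exp_pos _), Real.log_exp,
    EReal.left_distrib_of_nonneg_of_ne_top (EReal.coe_nonneg.2 hc.le) (EReal.coe_ne_top c),
    ← EReal.coe_mul, mul_div_cancel₀ _ hc.ne', elog]

lemma elog_ofReal_exp {c : ℝ} (hc : 0 < c) (r : ℝ) :
    elog c (ENNReal.ofReal (Real.exp (r / c))) = r := by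
  simpa [elog] using elog_ofReal_exp_mul hc r 1

lemma elog_add_add_le {c : ℝ} (hc : 0 ≤ c) (A B D : ℝ≥0∞) :
    elog c (A + B + D) ≤
      ((c * Real.log 3 : ℝ) : EReal) + max (max (elog c A) (elog c B)) (elog c D) := by
  have h3 : A + B + D ≤ 3 * max (max A B) D := by
    calc A + B + D ≤ max (max A B) D + max (max A B) D + max (max A B) D := by gcongr <;> simp
      _ = 3 * max (max A B) D := by ring
  have hmono : Monotone (elog c) := fun _ _ h => elog_mono hc h
  calc elog c (A + B + D) ≤ elog c (3 * max (max A B) D) := elog_mono hc h3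
    _ = _ := by
      rw [elog, ENNReal.log_mul_add,
        EReal.left_distrib_of_nonneg_of_ne_top (EReal.coe_nonneg.2 hc) (EReal.coe_ne_top c),
        show (3 : ℝ≥0∞) = ENNReal.ofReal 3 by norm_num, ENNReal.log_ofReal_of_pos (by norm_num),
        ← EReal.coe_mul, ← elog, hmono.map_max, hmono.map_max]

lemma EReal.limsup_coe_add_le {α : Type*} {f : Filter α} [f.NeBot] (r : ℝ) (v : α → EReal) :
    limsup (fun i => (r : EReal) + v i) f ≤ r + limsup v f :=
  (EReal.limsup_add_le (u := fun _ => (r : EReal)) (by simp) (by simp)).trans_eq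
    (by rw [limsup_const])

lemma limsup_elog_measure_nonpos {ι : Type*} {lf : Filter ι} {μ : ι → Measure ℝ}
    [∀ i, IsProbabilityMeasure (μ i)] {c : ι → ℝ} (hc : ∀ i, 0 ≤ c i) (s : ι → Set ℝ) :
    limsup (fun i => elog (c i) (μ i (s i))) lf ≤ 0 :=
  limsup_le_of_le (by isBoundedDefault)
    (Eventually.of_forall fun i => elog_nonpos (hc i) prob_le_one)

noncomputable def expMoment (ν : Measure ℝ) (c t : ℝ) : ℝ≥0∞ :=
  ∫⁻ x, ENNReal.ofReal (Real.exp (t * x / c)) ∂ν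

lemma genLogMGF_eq_limsup {ι : Type*} (lf : Filter ι) (μ : ι → Measure ℝ) (c : ι → ℝ)
    (t : ℝ) : genLogMGF lf μ c t = limsup (fun i => elog (c i) (expMoment (μ i) (c i) t)) lf :=
  rfl

section expMoment

variable (ν : Measure ℝ) (c : ℝ)

lemma measurable_ofReal_exp_mul_div (t : ℝ) :
    Measurable fun x : ℝ => ENNReal.ofReal (Real.exp (t * x / c)) := by
  fun_prop

lemma expMoment_zero [IsProbabilityMeasure ν] : expMoment ν c 0 = 1 := by
  simp [expMoment]

lemma expMoment_convexComb_le {p q : ℝ} (hp : 0 ≤ p) (hq : 0 ≤ q) (hpq : p + q = 1)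
    (u w : ℝ) :
    expMoment ν c (p * u + q * w) ≤ expMoment ν c u ^ p * expMoment ν c w ^ q := by
  refine le_of_eq_of_le (lintegral_congr fun x => ?_) (ENNReal.lintegral_mul_norm_pow_le
    (measurable_ofReal_exp_mul_div c u).aemeasurable
    (measurable_ofReal_exp_mul_div c w).aemeasurable hp hq hpq)
  rw [ENNReal.ofReal_rpow_of_pos (Real.exp_pos _), ENNReal.ofReal_rpow_of_pos (Real.exp_pos _),
    ← Real.exp_mul, ← Real.exp_mul, ← ENNReal.ofReal_mul (Real.exp_nonneg _), ← Real.exp_add]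
  congr 2
  ring

lemma expMoment_le_split [IsProbabilityMeasure ν] (hc : 0 < c) {t s : ℝ}
    (ht : 0 ≤ t) (hts : t ≤ s) (a b : ℝ) :
    expMoment ν c t ≤ ENNReal.ofReal (Real.exp (t * a / c)) +
      ENNReal.ofReal (Real.exp (t * b / c)) * ν (Ioo a b) +
      ENNReal.ofReal (Real.exp ((t - s) * b / c)) * expMoment ν c s := by
  set E : ℝ → ℝ≥0∞ := fun r => ENNReal.ofReal (Real.exp (r / c))
  have hE : Monotone E := fun r r' h =>
    ENNReal.ofReal_le_ofReal (Real.exp_le_exp.2 (div_le_div_of_nonneg_right h hc.le))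
  have hpoint : ∀ x, E (t * x) ≤ E (t * a) + (Ioo a b).indicator (fun _ => E (t * b)) x +
      E ((t - s) * b) * E (s * x) := by
    intro x
    rcases le_or_gt x a with hxa | hxa
    · exact le_add_right (le_add_right (hE (mul_le_mul_of_nonneg_left hxa ht)))
    rcases lt_or_ge x b with hxb | hxb
    · rw [indicator_of_mem (mem_Ioo.2 ⟨hxa, hxb⟩)]
      exact le_add_right (le_add_left (hE (mul_le_mul_of_nonneg_left hxb.le ht)))
    · refine le_add_left ((hE (show t * x ≤ (t - s) * b + s * x by nlinarith)).trans_eq ?_)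
      simp only [E]
      rw [← ENNReal.ofReal_mul (Real.exp_nonneg _), ← Real.exp_add, add_div]
  calc expMoment ν c t ≤ ∫⁻ x, (E (t * a) + (Ioo a b).indicator (fun _ => E (t * b)) x +
        E ((t - s) * b) * E (s * x)) ∂ν := lintegral_mono hpoint
    _ = _ := by
      rw [lintegral_add_right _ ((measurable_ofReal_exp_mul_div c s).const_mul _),
        lintegral_add_left measurable_const, lintegral_const, measure_univ, mul_one,
        lintegral_indicator_const measurableSet_Ioo,
        lintegral_const_mul _ (measurable_ofReal_exp_mul_div c s)]
      rfl

end expMoment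

section genLogMGF

variable {ι : Type*} (lf : Filter ι) (μ : ι → Measure ℝ) (c : ι → ℝ)

local notation "L" => genLogMGF lf μ c

lemma eventually_genLogMGF_mem_Ioo (hrc : Tendsto L (𝓝[>] 0) (𝓝 0)) {η : ℝ} (hη : 0 < η) :
    ∀ᶠ t in 𝓝[>] 0, ∃ r : ℝ, L t = r ∧ -η < r ∧ r < η := by
  filter_upwards [hrc.eventually (Ioo_mem_nhds (EReal.coe_lt_coe_iff.2 (neg_neg_of_pos hη))
    (EReal.coe_pos.2 hη))] with t ht
  lift L t to ℝ using
    ⟨(ht.2.trans (EReal.coe_lt_top η)).ne, (ht.1.trans' (EReal.bot_lt_coe _)).ne'⟩ with r hr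
  exact ⟨r, rfl, EReal.coe_lt_coe_iff.1 ht.1, EReal.coe_lt_coe_iff.1 ht.2⟩

variable [lf.NeBot]

lemma genLogMGF_convexComb_le (hc : ∀ i, 0 ≤ c i) {p q : ℝ} (hp : 0 < p) (hq : 0 < q)
    (hpq : p + q = 1) {u w : ℝ} (h : L u ≠ ⊥ ∨ L w ≠ ⊤) (h' : L u ≠ ⊤ ∨ L w ≠ ⊥) :
    L (p * u + q * w) ≤ p * L u + q * L w := by
  have hlimsup_mul : ∀ {r : ℝ}, 0 < r → ∀ v : ℝ,
      limsup (fun i => (r : EReal) * elog (c i) (expMoment (μ i) (c i) v)) lf = r * L v :=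
    fun hr v => EReal.limsup_const_mul_of_nonneg_of_ne_top (EReal.coe_nonneg.2 hr.le)
      (EReal.coe_ne_top _)
  calc L (p * u + q * w)
      ≤ limsup (fun i => (p : EReal) * elog (c i) (expMoment (μ i) (c i) u) +
          q * elog (c i) (expMoment (μ i) (c i) w)) lf := by
        refine limsup_le_limsup (Eventually.of_forall fun i => ?_)
        exact (elog_mono (hc i) (expMoment_convexComb_le _ _ hp.le hq.le hpq u w)).trans_eq
          (elog_rpow_mul_rpow (hc i) _ _ p q)
    _ ≤ p * L u + q * L w := by
        refine (EReal.limsup_add_le ?_ ?_).trans_eq ?_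
        all_goals simp only [hlimsup_mul hp, hlimsup_mul hq]
        · simpa [EReal.mul_eq_bot, EReal.mul_eq_top, hp, hq, hp.le, hq.le] using h
        · simpa [EReal.mul_eq_bot, EReal.mul_eq_top, hp, hq, hp.le, hq.le] using h'

variable [∀ i, IsProbabilityMeasure (μ i)]

lemma genLogMGF_zero : L 0 = 0 := by
  simp [genLogMGF_eq_limsup, expMoment_zero, elog]

lemma genLogMGF_le_div_mul (hc : ∀ i, 0 ≤ c i) {t s : ℝ} (ht : 0 < t) (hts : t < s) :
    L t ≤ ((t / s : ℝ) : EReal) * L s := by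
  have hs : 0 < s := ht.trans hts
  have h := genLogMGF_convexComb_le lf μ c hc (p := 1 - t / s) (q := t / s)
    (by rw [sub_pos, div_lt_one hs]; exact hts) (div_pos ht hs) (by ring) (u := 0) (w := s)
    (by simp [genLogMGF_zero]) (by simp [genLogMGF_zero])
  rwa [mul_zero, zero_add, div_mul_cancel₀ _ hs.ne', genLogMGF_zero, mul_zero, zero_add] at h

lemma genLogMGF_ne_bot (hc : ∀ i, 0 ≤ c i) (hrc : Tendsto L (𝓝[>] 0) (𝓝 0)) {s : ℝ}
    (hs : 0 < s) : L s ≠ ⊥ := by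
  intro hs_bot
  obtain ⟨t, hLt, hts⟩ := ((hrc.eventually (eventually_ne_nhds EReal.zero_ne_bot)).and
    (Ioo_mem_nhdsGT hs)).exists
  have := genLogMGF_le_div_mul lf μ c hc hts.1 hts.2
  rw [hs_bot, EReal.mul_bot_of_pos (EReal.coe_pos.2 (div_pos hts.1 hs)), le_bot_iff] at this
  exact hLt this

lemma exists_genLogMGF_lt_mul (hc : ∀ i, 0 ≤ c i) (hrc : Tendsto L (𝓝[>] 0) (𝓝 0))
    (hbot : rightLimE (rightDerivE L) 0 = ⊥) (K : ℝ) :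
    ∃ s r : ℝ, 0 < s ∧ L s = r ∧ r < s * K := by
  have hder : ∀ᶠ t in 𝓝[>] 0, rightDerivE L t < K :=
    eventually_lt_of_limsup_lt (hbot.trans_lt (EReal.bot_lt_coe K))
  obtain ⟨t, ⟨hderK, rt, hrt, -⟩, ht⟩ := ((hder.and (eventually_genLogMGF_mem_Ioo lf μ c hrc
    one_pos)).and self_mem_nhdsWithin).exists
  rw [rightDerivE] at hderK
  split_ifs at hderK with htop hbot_right
  · exact absurd hderK (not_lt.2 le_top)
  · obtain ⟨s, hts, hs⟩ := hbot_right
    exact absurd hs (genLogMGF_ne_bot lf μ c hc hrc (lt_trans ht hts))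
  -- some chord from `t` has slope `< K`, hence by convexity so has the chord from `0`
  -- to the same point
  obtain ⟨s, hts, hslope⟩ : ∃ s, t < s ∧ (L s - L t) * (((s - t)⁻¹ : ℝ) : EReal) < K := by
    simpa [iInf_lt_iff] using hderK
  have hs : 0 < s := lt_trans ht hts
  have hst : 0 < s - t := sub_pos.2 hts
  have hLs_ne_top : L s ≠ ⊤ := by
    intro htop
    rw [htop, hrt, EReal.top_sub_coe, EReal.top_mul_of_pos (EReal.coe_pos.2 (inv_pos.2 hst))]
      at hslope
    exact not_top_lt hslope
  lift L s to ℝ using ⟨hLs_ne_top, genLogMGF_ne_bot lf μ c hc hrc hs⟩ with rs hrs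
  have hchord := genLogMGF_le_div_mul lf μ c hc ht hts
  rw [← hrs, hrt, ← EReal.coe_mul, EReal.coe_le_coe_iff] at hchord
  rw [hrt, ← EReal.coe_sub, ← EReal.coe_mul, EReal.coe_lt_coe_iff, ← div_eq_mul_inv,
    div_lt_iff₀ hst] at hslope
  refine ⟨s, rs, hs, hrs.symm, ?_⟩
  rw [div_mul_eq_mul_div, le_div_iff₀ hs] at hchord
  nlinarith

lemma genLogMGF_eq_top_of_neg (hc : ∀ i, 0 ≤ c i) (hrc : Tendsto L (𝓝[>] 0) (𝓝 0))
    (hbot : rightLimE (rightDerivE L) 0 = ⊥) {t : ℝ} (ht : t < 0) : L t = ⊤ := by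
  have hchord : ∀ s r : ℝ, 0 < s → L s = r →
      0 ≤ ((s / (s - t) : ℝ) : EReal) * L t + ((-t / (s - t) : ℝ) : EReal) * r := by
    intro s r hs hr
    have hst : 0 < s - t := by linarith
    have h := genLogMGF_convexComb_le lf μ c hc (div_pos hs hst) (div_pos (neg_pos.2 ht) hst)
      (by field_simp; ring) (u := t) (w := s) (Or.inr (hr ▸ EReal.coe_ne_top r))
      (Or.inr (hr ▸ EReal.coe_ne_bot r))
    rwa [show s / (s - t) * t + -t / (s - t) * s = 0 by field_simp; ring, genLogMGF_zero, hr] at h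
  obtain ⟨s, r, hs, hr, -⟩ := exists_genLogMGF_lt_mul lf μ c hc hrc hbot 0
  by_contra hne
  have hLt_ne_bot : L t ≠ ⊥ := by
    intro hLt
    have := hchord s r hs hr
    rw [hLt, EReal.mul_bot_of_pos (EReal.coe_pos.2 (div_pos hs (by linarith))), EReal.bot_add,
      le_bot_iff] at this
    exact EReal.zero_ne_bot this
  lift L t to ℝ using ⟨hne, hLt_ne_bot⟩ with l hl
  obtain ⟨s, r, hs, hr, hrK⟩ := exists_genLogMGF_lt_mul lf μ c hc hrc hbot (l / t)
  have h := hchord s r hs hr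
  rw [← EReal.coe_mul, ← EReal.coe_mul, ← EReal.coe_add, EReal.coe_nonneg, div_mul_eq_mul_div,
    div_mul_eq_mul_div, ← add_div, div_nonneg_iff] at h
  have : t * (s * (l / t)) = s * l := by field_simp [ht.ne]
  rcases h with ⟨h, -⟩ | ⟨-, h⟩
  · nlinarith [mul_lt_mul_of_neg_left hrK ht]
  · linarith

lemma genLogMGF_le_max (hc : ∀ i, 0 < c i) (hc0 : Tendsto c lf (𝓝 0)) {t s : ℝ} (ht : 0 ≤ t)
    (hts : t ≤ s) (a b : ℝ) :
    L t ≤ max (max ((t * a : ℝ) : EReal)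
      (((t * b : ℝ) : EReal) + limsup (fun i => elog (c i) (μ i (Ioo a b))) lf))
      (((t - s) * b : ℝ) + L s) := by
  have hpoint : ∀ i, elog (c i) (expMoment (μ i) (c i) t) ≤ ((c i * Real.log 3 : ℝ) : EReal) +
      max (max ((t * a : ℝ) : EReal) (((t * b : ℝ) : EReal) + elog (c i) (μ i (Ioo a b))))
        (((t - s) * b : ℝ) + elog (c i) (expMoment (μ i) (c i) s)) := by
    intro i
    refine (elog_mono (hc i).le (expMoment_le_split _ _ (hc i) ht hts a b)).trans ?_
    refine (elog_add_add_le (hc i).le _ _ _).trans_eq ?_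
    rw [elog_ofReal_exp (hc i), elog_ofReal_exp_mul (hc i), elog_ofReal_exp_mul (hc i)]
  have hlog3 : limsup (fun i => ((c i * Real.log 3 : ℝ) : EReal)) lf = 0 := by
    refine Tendsto.limsup_eq ?_
    have h : Tendsto (fun i => c i * Real.log 3) lf (𝓝 0) := by
      simpa using hc0.mul_const (Real.log 3)
    exact (continuous_coe_real_ereal.tendsto 0).comp h
  calc L t ≤ limsup (fun i => ((c i * Real.log 3 : ℝ) : EReal) +
      max (max ((t * a : ℝ) : EReal) (((t * b : ℝ) : EReal) + elog (c i) (μ i (Ioo a b))))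
        (((t - s) * b : ℝ) + elog (c i) (expMoment (μ i) (c i) s))) lf :=
        limsup_le_limsup (Eventually.of_forall hpoint)
    _ ≤ limsup (fun i => max (max ((t * a : ℝ) : EReal)
          (((t * b : ℝ) : EReal) + elog (c i) (μ i (Ioo a b))))
          (((t - s) * b : ℝ) + elog (c i) (expMoment (μ i) (c i) s))) lf := by
        refine (EReal.limsup_add_le (Or.inl ?_) (Or.inl ?_)).trans_eq ?_ <;> rw [hlog3]
        · exact EReal.zero_ne_bot
        · exact EReal.zero_ne_top
        · exact zero_add _
    _ ≤ _ := by
        rw [limsup_max, limsup_max, limsup_const]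
        gcongr
        · exact EReal.limsup_coe_add_le _ _
        · exact EReal.limsup_coe_add_le _ _

lemma exists_lt_limsup_elog_measure_Ioo (hc : ∀ i, 0 < c i) (hc0 : Tendsto c lf (𝓝 0))
    (hrc : Tendsto L (𝓝[>] 0) (𝓝 0)) (hbot : rightLimE (rightDerivE L) 0 = ⊥) (b : ℝ) {e : ℝ}
    (he : e < 0) : ∃ a : ℝ, (e : EReal) < limsup (fun i => elog (c i) (μ i (Ioo a b))) lf := by
  by_contra! hIoo
  obtain ⟨s, r, hs, hLs, hr⟩ :=
    exists_genLogMGF_lt_mul lf μ c (fun i => (hc i).le) hrc hbot (b - 1)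
  set m := min (-e) s
  have hm : 0 < m := lt_min (neg_pos.2 he) hs
  have hbound : ∀ {t : ℝ}, 0 < t → t ≤ s → ∀ a,
      L t ≤ max ((t * a : ℝ) : EReal) ((t * b - m : ℝ) : EReal) := by
    intro t ht hts a
    refine (genLogMGF_le_max lf μ c hc hc0 ht.le hts a b).trans ?_
    rw [hLs]
    refine max_le (max_le (le_max_left _ _) ?_) ?_ <;> refine le_max_of_le_right ?_
    · have he_m : (e : EReal) ≤ ((-m : ℝ) : EReal) :=
        EReal.coe_le_coe_iff.2 (by linarith [min_le_left (-e) s])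
      refine (add_le_add le_rfl ((hIoo a).trans he_m)).trans_eq ?_
      rw [← EReal.coe_add, sub_eq_add_neg]
    · -- `(t - s) b + L̄(s) < t b - s` by the choice of `s`
      rw [← EReal.coe_add, EReal.coe_le_coe_iff]
      nlinarith [min_le_right (-e) s]
  have htb : ∀ᶠ t in 𝓝[>] (0 : ℝ), t * b < m / 2 :=
    (((continuous_mul_const b).tendsto' 0 0 (zero_mul b)).eventually
      (eventually_lt_nhds (half_pos hm))).filter_mono nhdsWithin_le_nhds
  obtain ⟨t, ⟨⟨rt, hrt, hrt_gt, -⟩, htb⟩, hts⟩ := (((eventually_genLogMGF_mem_Ioo lf μ c hrc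
    (half_pos hm)).and htb).and (Ioo_mem_nhdsGT hs)).exists
  have h := hbound hts.1 hts.2.le (-m / (2 * t))
  rw [hrt, show t * (-m / (2 * t)) = -(m / 2) by field_simp [hts.1.ne'], le_max_iff,
    EReal.coe_le_coe_iff, EReal.coe_le_coe_iff] at h
  rcases h with h | h <;> linarith

lemma limsup_elog_muIooE_eq_zero (hc : ∀ i, 0 < c i) (hc0 : Tendsto c lf (𝓝 0))
    (hrc : Tendsto L (𝓝[>] 0) (𝓝 0)) (hbot : rightLimE (rightDerivE L) 0 = ⊥) {x y : ι → EReal}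
    (hx : Tendsto x lf (𝓝 ⊥)) (hy : ⊥ < liminf y lf) :
    limsup (fun i => elog (c i) (muIooE (μ i) (x i) (y i))) lf = 0 := by
  refine le_antisymm (limsup_elog_measure_nonpos (fun i => (hc i).le) _)
    (EReal.ge_of_forall_gt_iff_ge.1 fun e he => ?_)
  obtain ⟨b, -, hb⟩ := EReal.exists_between_coe_real hy
  obtain ⟨a, ha⟩ := exists_lt_limsup_elog_measure_Ioo lf μ c hc hc0 hrc hbot b
    (EReal.coe_lt_coe_iff.1 he)
  refine ha.le.trans (limsup_le_limsup ?_)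
  filter_upwards [hx (Iio_mem_nhds (EReal.bot_lt_coe a)), eventually_lt_of_lt_liminf hb]
    with i hxa hyb
  exact elog_mono (hc i).le (measure_mono fun z hz =>
    ⟨hxa.trans (EReal.coe_lt_coe_iff.2 hz.1), (EReal.coe_lt_coe_iff.2 hz.2).trans hyb⟩)

lemma legendreExt_genLogMGF_nonneg (hrc : Tendsto L (𝓝[>] 0) (𝓝 0)) (x : EReal) :
    0 ≤ LegendreExt L x := by
  rw [LegendreExt]
  split_ifs
  · rw [show rightLimE L 0 = 0 from hrc.limsup_eq, neg_zero]
  · exact le_top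
  · exact le_iSup_of_le 0 (by simp [genLogMGF_zero])

lemma exists_legendreEE_genLogMGF_le (hc : ∀ i, 0 ≤ c i) (hrc : Tendsto L (𝓝[>] 0) (𝓝 0))
    (hbot : rightLimE (rightDerivE L) 0 = ⊥) {η : ℝ} (hη : 0 < η) :
    ∃ ξ₀ : ℝ, ∀ ξ : ℝ, ξ ≤ ξ₀ → LegendreEE L ξ ≤ η := by
  obtain ⟨δ', hδ', hnear⟩ :=
    mem_nhdsGT_iff_exists_Ioo_subset.1 (eventually_genLogMGF_mem_Ioo lf μ c hrc hη)
  set δ := δ' / 2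
  have hδ : 0 < δ := half_pos hδ'
  obtain ⟨rδ, hrδ, -⟩ := hnear ⟨hδ, half_lt_self hδ'⟩
  refine ⟨min 0 (rδ / δ), fun ξ hξ => iSup_le fun t => ?_⟩
  have hξ0 : ξ ≤ 0 := hξ.trans (min_le_left _ _)
  rcases lt_trichotomy t 0 with ht | rfl | ht
  · rw [genLogMGF_eq_top_of_neg lf μ c hc hrc hbot ht, EReal.sub_top]
    exact bot_le
  · simpa [genLogMGF_zero] using hη.le
  rcases le_or_gt t δ with htδ | hδt
  · obtain ⟨r, hr, hr_gt, -⟩ := hnear ⟨ht, htδ.trans_lt (half_lt_self hδ')⟩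
    rw [hr, ← EReal.coe_mul, ← EReal.coe_sub, EReal.coe_le_coe_iff]
    nlinarith [mul_nonpos_of_nonneg_of_nonpos ht.le hξ0]
  rcases eq_or_ne (L t) ⊤ with htop | hne_top
  · rw [htop, EReal.sub_top]
    exact bot_le
  lift L t to ℝ using ⟨hne_top, genLogMGF_ne_bot lf μ c hc hrc ht⟩ with r hr
  have hchord := genLogMGF_le_div_mul lf μ c hc hδ hδt
  rw [← hr, hrδ, ← EReal.coe_mul, EReal.coe_le_coe_iff, div_mul_eq_mul_div, le_div_iff₀ ht]
    at hchord
  have hξδ : ξ * δ ≤ rδ := (le_div_iff₀ hδ).1 (hξ.trans (min_le_right _ _))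
  rw [← EReal.coe_mul, ← EReal.coe_sub, EReal.coe_le_coe_iff]
  nlinarith

lemma tendsto_legendreExt_genLogMGF_bot (hc : ∀ i, 0 ≤ c i)
    (hrc : Tendsto L (𝓝[>] 0) (𝓝 0)) (hbot : rightLimE (rightDerivE L) 0 = ⊥) :
    Tendsto (LegendreExt L) (𝓝 ⊥) (𝓝 0) := by
  refine tendsto_order.2 ⟨fun a ha => Eventually.of_forall fun x =>
    ha.trans_le (legendreExt_genLogMGF_nonneg lf μ c hrc x), fun a ha => ?_⟩
  obtain ⟨η, hη, hηa⟩ := EReal.exists_between_coe_real ha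
  obtain ⟨ξ₀, hξ₀⟩ :=
    exists_legendreEE_genLogMGF_le lf μ c hc hrc hbot (EReal.coe_pos.1 hη)
  filter_upwards [Iio_mem_nhds (EReal.bot_lt_coe ξ₀)] with x hx
  induction x using EReal.rec with
  | bot => rwa [LegendreExt, if_pos rfl, show rightLimE L 0 = 0 from hrc.limsup_eq, neg_zero]
  | top => exact absurd (mem_Iio.1 hx) (not_lt.2 le_top)
  | coe ξ =>
    rw [LegendreExt, if_neg (EReal.coe_ne_bot ξ), if_neg (EReal.coe_ne_top ξ)]
    exact (hξ₀ ξ (EReal.coe_lt_coe_iff.1 hx).le).trans_lt hηa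

end genLogMGF

theorem statement4_general
    {ι : Type*} (lf : Filter ι) [lf.NeBot]
    (μ : ι → Measure ℝ) [∀ i, IsProbabilityMeasure (μ i)]
    (c : ι → ℝ) (hc : ∀ i, 0 < c i) (hc0 : Filter.Tendsto c lf (nhds (0 : ℝ)))
    (L : ℝ → EReal) (hL : L = genLogMGF lf μ c)
    (hbot : rightLimE (rightDerivE L) 0 = ⊥)
    (hrc : Filter.Tendsto L (nhdsWithin 0 (Set.Ioi 0)) (nhds (0 : EReal)))
    (x y : ι → EReal)
    (hx : Filter.Tendsto x lf (nhds (⊥ : EReal)))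
    (hy : ⊥ < Filter.liminf y lf) :
    Filter.limsup (fun i => elog (c i) (muIccE (μ i) (x i) (y i))) lf = 0 ∧
    Filter.limsup (fun i => elog (c i) (muIooE (μ i) (x i) (y i))) lf = 0 ∧
    Filter.Tendsto (fun i => LegendreExt L (x i)) lf (nhds (0 : EReal)) := by
  subst hL
  have hIoo := limsup_elog_muIooE_eq_zero lf μ c hc hc0 hrc hbot hx hy
  refine ⟨le_antisymm (limsup_elog_measure_nonpos (fun i => (hc i).le) _) ?_, hIoo,
    (tendsto_legendreExt_genLogMGF_bot lf μ c (fun i => (hc i).le) hrc hbot).comp hx⟩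
  refine hIoo.symm.le.trans (limsup_le_limsup (Eventually.of_forall fun i => ?_))
  exact elog_mono (hc i).le (measure_mono fun z hz => ⟨hz.1.le, hz.2.le⟩)

theorem statement4
    {ι : Type*} (lf : Filter ι) [lf.NeBot]
    (μ : ι → Measure ℝ) [∀ i, IsProbabilityMeasure (μ i)]
    (c : ι → ℝ) (hc : ∀ i, 0 < c i) (hc0 : Filter.Tendsto c lf (nhds (0 : ℝ)))
    (L : ℝ → EReal) (hL : L = genLogMGF lf μ c)
    (eps : ℝ) (heps : 0 < eps)
    (hdiff : ∀ t ∈ Set.Ioo (0:ℝ) eps, EDifferentiableAt L t)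
    (hsup : ∀ t ∈ Set.Ioo (0:ℝ) eps, ∃ s ∈ Set.Ioo (0:ℝ) eps,
      rightDerivE L t < rightDerivE L s)
    (hbot : rightLimE (rightDerivE L) 0 = ⊥)
    (hrc : Filter.Tendsto L (nhdsWithin 0 (Set.Ioi 0)) (nhds (0 : EReal)))
    (x y : ι → EReal)
    (hx : Filter.Tendsto x lf (nhds (⊥ : EReal)))
    (hy : ⊥ < Filter.liminf y lf) :
    Filter.limsup (fun i => elog (c i) (muIccE (μ i) (x i) (y i))) lf = 0 ∧
    Filter.limsup (fun i => elog (c i) (muIooE (μ i) (x i) (y i))) lf = 0 ∧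
    Filter.Tendsto (fun i => LegendreExt L (x i)) lf (nhds (0 : EReal)) :=
  statement4_general lf μ c hc hc0 L hL hbot hrc x y hx hy
end

section
/- The restriction L̄|[0,+∞) is improper (i.e. not proper) if and only if there exists T ∈ (0, +∞] such that L̄(t) = −∞ and L̄'_r(s) = −∞ for all t ∈ (0, T) and all s ∈ [0, T), and L̄(t) = +∞ and L̄'_r(s) = +∞ for all t ∈ (T, +∞) and all s ∈ [T, +∞). -/
open Filter MeasureTheory Set Topology

/-!
For `u ≤ t ≤ v` and any `K`, splitting the line at `x = K` gives
`e^{tx} ≤ e^{(t-u)K} e^{ux} + e^{(t-v)K} e^{vx}`, hence the convexity estimate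
`L̄(t) ≤ max (L̄(u) + (t-u)K) (L̄(v) + (t-v)K)`, which stays meaningful when values are `±∞`.
Since `L̄(0) = 0`, letting `K → -∞` shows that `L̄(t) = -∞` for some `t > 0` forces `L̄ = -∞`
on `(0, t]`; letting `K → +∞` shows that `L̄(u) = -∞` and `L̄(v) < +∞` force `L̄ = -∞` on
`[u, v)`. So if `L̄|[0,∞)` is improper it is `-∞` somewhere in `(0,∞)`, and
`T = sup {t > 0 : L̄(t) = -∞}` separates the region `L̄ = -∞` from the region `L̄ = +∞`;
the conventions for `L̄'_r` then give its values.
-/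

open Real

theorem elog_le_coe_iff {a : ℝ} (ha : 0 < a) (m : ENNReal) (R : ℝ) :
    elog a m ≤ R ↔ m ≤ ENNReal.ofReal (exp (R / a)) := by
  rw [← ENNReal.log_le_log_iff, ENNReal.log_ofReal_of_pos (exp_pos _), Real.log_exp,
    EReal.coe_div, EReal.le_div_iff_mul_le (by exact_mod_cast ha) (EReal.coe_ne_top a), elog,
    mul_comm]

theorem mul_le_max_add_mul {u t v : ℝ} (hut : u ≤ t) (htv : t ≤ v) (K x : ℝ) :
    t * x ≤ max ((t - u) * K + u * x) ((t - v) * K + v * x) := by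
  rcases le_total x K with hx | hx
  · exact le_max_of_le_left (by nlinarith)
  · exact le_max_of_le_right (by nlinarith)

theorem ofReal_exp_mul_div_le {u t v a : ℝ} (hut : u ≤ t) (htv : t ≤ v) (ha : 0 ≤ a) (K x : ℝ) :
    ENNReal.ofReal (exp (t * x / a)) ≤
      ENNReal.ofReal (exp ((t - u) * K / a)) * ENNReal.ofReal (exp (u * x / a)) +
        ENNReal.ofReal (exp ((t - v) * K / a)) * ENNReal.ofReal (exp (v * x / a)) := by
  simp only [← ENNReal.ofReal_mul (exp_nonneg _), ← exp_add, ← add_div]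
  calc ENNReal.ofReal (exp (t * x / a))
      ≤ ENNReal.ofReal (exp (max ((t - u) * K + u * x) ((t - v) * K + v * x) / a)) := by
        gcongr; exact mul_le_max_add_mul hut htv K x
    _ = max (ENNReal.ofReal (exp (((t - u) * K + u * x) / a)))
          (ENNReal.ofReal (exp (((t - v) * K + v * x) / a))) := by
        rw [← ENNReal.ofReal_max, ← exp_monotone.map_max, max_div_div_right ha]
    _ ≤ _ := max_le_add_of_nonneg zero_le zero_le

theorem lintegral_exp_mul_div_le (ν : Measure ℝ) {u t v a : ℝ} (hut : u ≤ t) (htv : t ≤ v)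
    (ha : 0 ≤ a) (K : ℝ) :
    ∫⁻ x, ENNReal.ofReal (exp (t * x / a)) ∂ν ≤
      ENNReal.ofReal (exp ((t - u) * K / a)) * ∫⁻ x, ENNReal.ofReal (exp (u * x / a)) ∂ν +
        ENNReal.ofReal (exp ((t - v) * K / a)) * ∫⁻ x, ENNReal.ofReal (exp (v * x / a)) ∂ν := by
  rw [← lintegral_const_mul _ (by fun_prop), ← lintegral_const_mul _ (by fun_prop),
    ← lintegral_add_left (by fun_prop)]
  exact lintegral_mono (ofReal_exp_mul_div_le hut htv ha K)

theorem two_mul_exp_div_le_exp_div {a m R : ℝ} (ha : 0 < a) (h : a ≤ R - m) :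
    2 * exp (m / a) ≤ exp (R / a) := by
  have h2 : 2 ≤ exp ((R - m) / a) := by
    linarith [add_one_le_exp ((R - m) / a), (one_le_div ha).2 h]
  calc 2 * exp (m / a) ≤ exp ((R - m) / a) * exp (m / a) := by gcongr
    _ = exp (R / a) := by rw [← exp_add, ← add_div, sub_add_cancel]

section genLogMGF

variable {ι : Type*} {lf : Filter ι} {μ : ι → Measure ℝ} {c : ι → ℝ}

theorem genLogMGF_le_max_s7 (hc : ∀ i, 0 < c i) (hc0 : Tendsto c lf (𝓝 0)) {u t v : ℝ}
    (hut : u ≤ t) (htv : t ≤ v) (K : ℝ) {S₁ S₂ : ℝ}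
    (h₁ : genLogMGF lf μ c u < S₁) (h₂ : genLogMGF lf μ c v < S₂) :
    genLogMGF lf μ c t ≤ ↑(max (S₁ + (t - u) * K) (S₂ + (t - v) * K)) := by
  set m := max (S₁ + (t - u) * K) (S₂ + (t - v) * K)
  refine EReal.le_of_forall_lt_iff_le.1 fun R hR => limsup_le_of_le (by isBoundedDefault) ?_
  have hRm : 0 < R - m := sub_pos.2 (EReal.coe_lt_coe_iff.1 hR)
  filter_upwards [eventually_lt_of_limsup_lt h₁, eventually_lt_of_limsup_lt h₂,
    hc0.eventually (eventually_le_nhds hRm)] with i hu hv hci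
  have hcpos := hc i
  rw [elog_le_coe_iff hcpos]
  replace hu := (elog_le_coe_iff hcpos _ _).1 hu.le
  replace hv := (elog_le_coe_iff hcpos _ _).1 hv.le
  have hexp : ∀ S d : ℝ, S + d ≤ m →
      ENNReal.ofReal (exp (d / c i)) * ENNReal.ofReal (exp (S / c i)) ≤
        ENNReal.ofReal (exp (m / c i)) := by
    intro S d hSd
    rw [← ENNReal.ofReal_mul (exp_nonneg _), ← exp_add, ← add_div, add_comm]
    gcongr
  calc _ ≤ ENNReal.ofReal (exp ((t - u) * K / c i)) * ENNReal.ofReal (exp (S₁ / c i)) +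
        ENNReal.ofReal (exp ((t - v) * K / c i)) * ENNReal.ofReal (exp (S₂ / c i)) :=
      (lintegral_exp_mul_div_le _ hut htv hcpos.le K).trans (by gcongr)
    _ ≤ ENNReal.ofReal (2 * exp (m / c i)) := by
      rw [two_mul, ENNReal.ofReal_add (exp_nonneg _) (exp_nonneg _)]
      exact add_le_add (hexp _ _ (le_max_left _ _)) (hexp _ _ (le_max_right _ _))
    _ ≤ ENNReal.ofReal (exp (R / c i)) :=
      ENNReal.ofReal_le_ofReal (two_mul_exp_div_le_exp_div hcpos hci)

theorem genLogMGF_zero_s7 [lf.NeBot] [∀ i, IsProbabilityMeasure (μ i)] :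
    genLogMGF lf μ c 0 = 0 := by
  simp [genLogMGF, elog]

theorem genLogMGF_eq_bot_of_lt [lf.NeBot] [∀ i, IsProbabilityMeasure (μ i)] (hc : ∀ i, 0 < c i)
    (hc0 : Tendsto c lf (𝓝 0)) {u t : ℝ} (hu : 0 < u) (hut : u < t)
    (ht : genLogMGF lf μ c t = ⊥) : genLogMGF lf μ c u = ⊥ := by
  refine (EReal.eq_bot_iff_forall_lt _).2 fun y => ?_
  set K := (y - 2) / u
  have h₀ : genLogMGF lf μ c 0 < (1 : ℝ) := by rw [genLogMGF_zero_s7]; exact_mod_cast one_pos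
  have ht' : genLogMGF lf μ c t < (y - 1 - (u - t) * K : ℝ) := by
    rw [ht]; exact EReal.bot_lt_coe _
  have hK : 1 + (u - 0) * K = y - 1 := by simp only [K]; field_simp; ring
  calc genLogMGF lf μ c u ≤ ↑(max (1 + (u - 0) * K) (y - 1 - (u - t) * K + (u - t) * K)) :=
        genLogMGF_le_max_s7 hc hc0 hu.le hut.le K h₀ ht'
    _ = ↑(y - 1) := by rw [hK, sub_add_cancel, max_self]
    _ < y := EReal.coe_lt_coe_iff.2 (sub_one_lt y)

theorem genLogMGF_eq_bot_of_eq_bot_of_ne_top (hc : ∀ i, 0 < c i) (hc0 : Tendsto c lf (𝓝 0))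
    {u t v : ℝ} (hut : u ≤ t) (htv : t < v) (hu : genLogMGF lf μ c u = ⊥)
    (hv : genLogMGF lf μ c v ≠ ⊤) : genLogMGF lf μ c t = ⊥ := by
  obtain ⟨B, hB, -⟩ := EReal.lt_iff_exists_real_btwn.1 (lt_top_iff_ne_top.2 hv)
  refine (EReal.eq_bot_iff_forall_lt _).2 fun y => ?_
  set K := (B - y + 1) / (v - t)
  have hu' : genLogMGF lf μ c u < (y - 1 - (t - u) * K : ℝ) := by
    rw [hu]; exact EReal.bot_lt_coe _
  have hK : B + (t - v) * K = y - 1 := by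
    simp only [K]; field_simp [(sub_pos.2 htv).ne']; ring
  calc genLogMGF lf μ c t ≤ ↑(max (y - 1 - (t - u) * K + (t - u) * K) (B + (t - v) * K)) :=
        genLogMGF_le_max_s7 hc hc0 hut htv.le K hu' hB
    _ = ↑(y - 1) := by rw [hK, sub_add_cancel, max_self]
    _ < y := EReal.coe_lt_coe_iff.2 (sub_one_lt y)

theorem exists_threshold_of_genLogMGF_eq_bot [lf.NeBot] [∀ i, IsProbabilityMeasure (μ i)]
    (hc : ∀ i, 0 < c i) (hc0 : Tendsto c lf (𝓝 0)) {t₀ : ℝ} (ht₀ : 0 < t₀)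
    (hbot : genLogMGF lf μ c t₀ = ⊥) :
    ∃ T : EReal, 0 < T ∧
      (∀ t : ℝ, 0 < t → (t : EReal) < T → genLogMGF lf μ c t = ⊥) ∧
      ∀ t : ℝ, T < t → genLogMGF lf μ c t = ⊤ := by
  set T := ⨆ t ∈ {t : ℝ | 0 < t ∧ genLogMGF lf μ c t = ⊥}, (t : EReal)
  have hle : ∀ t, 0 < t → genLogMGF lf μ c t = ⊥ → (t : EReal) ≤ T := fun t ht hb =>
    le_iSup₂ (f := fun (t : ℝ) _ => (t : EReal)) t ⟨ht, hb⟩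
  refine ⟨T, (EReal.coe_pos.2 ht₀).trans_le (hle t₀ ht₀ hbot), fun t ht htT => ?_,
    fun t hTt => ?_⟩
  · obtain ⟨s, ⟨-, hs⟩, hts⟩ := lt_biSup_iff.1 htT
    exact genLogMGF_eq_bot_of_lt hc hc0 ht (EReal.coe_lt_coe_iff.1 hts) hs
  · by_contra hne
    obtain ⟨m, hTm, hmt⟩ := EReal.lt_iff_exists_real_btwn.1 hTt
    have ht₀m : t₀ < m := EReal.coe_lt_coe_iff.1 ((hle t₀ ht₀ hbot).trans_lt hTm)
    have hm : genLogMGF lf μ c m = ⊥ :=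
      genLogMGF_eq_bot_of_eq_bot_of_ne_top hc hc0 ht₀m.le (EReal.coe_lt_coe_iff.1 hmt) hbot hne
    exact (hle m (ht₀.trans ht₀m) hm).not_gt hTm

end genLogMGF

theorem rightDerivE_eq_bot_of_eq_bot {L : ℝ → EReal} {t s : ℝ} (hts : t < s) (hs : L s = ⊥) :
    rightDerivE L t = ⊥ := by
  rw [rightDerivE, if_neg fun h => bot_ne_top (hs.symm.trans (h s hts)), if_pos ⟨s, hts, hs⟩]

theorem rightDerivE_of_forall_eq_top {L : ℝ → EReal} {t : ℝ} (h : ∀ s, t < s → L s = ⊤) :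
    rightDerivE L t = ⊤ :=
  if_pos h

theorem exists_pos_eq_bot_of_not_lbarProper {L : ℝ → EReal} (h0 : L 0 = 0)
    (h : ¬ LbarProper L) : ∃ t, 0 < t ∧ L t = ⊥ := by
  by_contra! hpos
  refine h ⟨fun t ht => ?_, 0, le_rfl, by simp [h0]⟩
  rcases ht.eq_or_lt with rfl | ht
  · simp [h0]
  · exact hpos t ht

theorem statement7
    {ι : Type*} (lf : Filter ι) [lf.NeBot]
    (μ : ι → Measure ℝ) [∀ i, IsProbabilityMeasure (μ i)]
    (c : ι → ℝ) (hc : ∀ i, 0 < c i) (hc0 : Filter.Tendsto c lf (nhds (0 : ℝ)))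
    (L : ℝ → EReal) (hL : L = genLogMGF lf μ c)
    :
    ¬ LbarProper L ↔ ∃ T : EReal, 0 < T ∧
      (∀ t : ℝ, 0 < t → (t : EReal) < T → L t = ⊥) ∧
      (∀ s : ℝ, 0 ≤ s → (s : EReal) < T → rightDerivE L s = ⊥) ∧
      (∀ t : ℝ, T < (t : EReal) → L t = ⊤) ∧
      (∀ s : ℝ, 0 ≤ s → T ≤ (s : EReal) → rightDerivE L s = ⊤) := by
  subst hL
  constructor
  · intro hnp
    obtain ⟨t₀, ht₀, hbot⟩ := exists_pos_eq_bot_of_not_lbarProper genLogMGF_zero_s7 hnp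
    obtain ⟨T, hT, hbelow, habove⟩ := exists_threshold_of_genLogMGF_eq_bot hc hc0 ht₀ hbot
    refine ⟨T, hT, hbelow, fun s hs hsT => ?_, habove, fun s _ hTs => ?_⟩
    · obtain ⟨m, hsm, hmT⟩ := EReal.lt_iff_exists_real_btwn.1 hsT
      have hsm' : s < m := EReal.coe_lt_coe_iff.1 hsm
      exact rightDerivE_eq_bot_of_eq_bot hsm' (hbelow m (hs.trans_lt hsm') hmT)
    · exact rightDerivE_of_forall_eq_top fun t hst =>
        habove t (hTs.trans_lt (EReal.coe_lt_coe_iff.2 hst))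
  · rintro ⟨T, hT, hbelow, -⟩ ⟨hne, -⟩
    obtain ⟨x, hx, hxT⟩ := EReal.lt_iff_exists_real_btwn.1 hT
    have hx' : 0 < x := EReal.coe_pos.1 hx
    exact hne x hx'.le (hbelow x hx' hxT)
end
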